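/- arXiv:2112.14179 — 3 statements merged into one kernel-verified Lean document; each statement's English description precedes it below -/
import Mathlib

section
/- For ν ∈ (−1,1), ν ≠ 0, define M_ν(z) = (i − cot(πν/2))·(z/i)^ν + cot(πν/2) and N_ν(z) = (i + cot(πν/2))·(z/i)^ν − cot(πν/2) for z in the open upper half-plane, where (z/i)^ν = exp(ν(log z − iπ/2)) with principal log. Then M_ν(−1/z) = N_{−ν}(z) for all z in the open upper half-plane. -/
open Real Complex

/-- `(z/i)^ν = exp(ν(log z − iπ/2))`, principal branch of `log`. -/
noncomputable def zOverIPow (ν : ℝ) (z : ℂ) : ℂ :=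
  Complex.exp (ν * (Complex.log z - Complex.I * π / 2))

/-- The Weyl–Titchmarsh function `M_ν(z) = (i − cot(πν/2))(z/i)^ν + cot(πν/2)`. -/
noncomputable def Mfun (ν : ℝ) (z : ℂ) : ℂ :=
  (Complex.I - ((Real.cos (π * ν / 2) / Real.sin (π * ν / 2) : ℝ) : ℂ)) * zOverIPow ν z +
    ((Real.cos (π * ν / 2) / Real.sin (π * ν / 2) : ℝ) : ℂ)

/-- The Weyl–Titchmarsh function `N_ν(z) = (i + cot(πν/2))(z/i)^ν − cot(πν/2)`. -/
noncomputable def Nfun (ν : ℝ) (z : ℂ) : ℂ :=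
  (Complex.I + ((Real.cos (π * ν / 2) / Real.sin (π * ν / 2) : ℝ) : ℂ)) * zOverIPow ν z -
    ((Real.cos (π * ν / 2) / Real.sin (π * ν / 2) : ℝ) : ℂ)

/-!
On the upper half-plane the principal logarithm satisfies `log (-1/z) = -log z + iπ`, hence
`((-1/z)/i)^ν = (z/i)^(-ν)`. Since `cot` is odd, `cot(π(-ν)/2) = -cot(πν/2)`, which turns the
coefficients of `M_ν` into those of `N_{-ν}`.
-/

namespace Complex

theorem log_neg_of_im_neg {x : ℂ} (hx : x.im < 0) : log (-x) = log x + π * I := by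
  simp only [log, norm_neg, arg_neg_eq_arg_add_pi_of_im_neg hx, ofReal_add]
  ring

theorem log_neg_one_div_of_im_pos {z : ℂ} (hz : 0 < z.im) :
    log (-1 / z) = -log z + π * I := by
  have him_inv : z⁻¹.im < 0 := by
    rw [inv_im]
    exact div_neg_of_neg_of_pos (neg_lt_zero.2 hz) (normSq_pos.2 fun h => by simp [h] at hz)
  have harg : z.arg ≠ π := fun h => hz.ne' (arg_eq_pi_iff.1 h).2
  rw [neg_div, one_div, log_neg_of_im_neg him_inv, log_inv z harg]

end Complex

theorem zOverIPow_neg_one_div (ν : ℝ) {z : ℂ} (hz : 0 < z.im) :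
    zOverIPow ν (-1 / z) = zOverIPow (-ν) z := by
  simp only [zOverIPow, Complex.log_neg_one_div_of_im_pos hz]
  congr 1
  push_cast
  ring

theorem Mfun_neg_inv_eq_Nfun_general (ν : ℝ)
    (z : ℂ) (hz : 0 < z.im) :
    Mfun ν (-1 / z) = Nfun (-ν) z := by
  have hcot : Real.cos (π * -ν / 2) / Real.sin (π * -ν / 2) =
      -(Real.cos (π * ν / 2) / Real.sin (π * ν / 2)) := by
    rw [mul_neg, neg_div, Real.cos_neg, Real.sin_neg, div_neg]
  rw [Mfun, Nfun, zOverIPow_neg_one_div ν hz, hcot]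
  push_cast
  ring

/-- For `ν ∈ (−1,1)`, `ν ≠ 0`, and `z` in the upper half-plane,
`M_ν(−1/z) = N_{−ν}(z)`. -/
theorem Mfun_neg_inv_eq_Nfun (ν : ℝ) (hν : ν ∈ Set.Ioo (-1 : ℝ) 1) (hν0 : ν ≠ 0)
    (z : ℂ) (hz : 0 < z.im) :
    Mfun ν (-1 / z) = Nfun (-ν) z :=
  Mfun_neg_inv_eq_Nfun_general ν z hz
end

section
/- For ν ∈ (−1,1), ν ≠ 0, with M_ν as above (M_ν(z) = (i − cot(πν/2))·(z/i)^ν + cot(πν/2)), the pointwise limit as ν → 0 holds: for each fixed z in the open upper half-plane, lim_{ν→0, ν≠0} M_ν(z) = (2/π)·log(−1/z), where log is the principal branch. -/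
open Real Complex Filter Topology

lemma log_neg_one_div {z : ℂ} (hz : 0 < z.im) :
    Complex.log (-1 / z) = ↑π * Complex.I - Complex.log z := by
  have hz0 : z ≠ 0 := by intro h; simp [h] at hz
  have harg : Complex.arg z ≠ π := by
    rw [ne_eq, Complex.arg_eq_pi_iff]; rintro ⟨-, h⟩; simp [h] at hz
  have hinv_im : (z⁻¹).im < 0 := by
    rw [Complex.inv_im]
    have : 0 < Complex.normSq z := Complex.normSq_pos.2 hz0
    exact div_neg_of_neg_of_pos (neg_lt_zero.2 hz) this
  have hrw : (-1 / z : ℂ) = -(z⁻¹) := by rw [neg_div, one_div]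
  rw [hrw]
  apply Complex.ext
  · simp [Complex.log_re, Complex.log_im, map_inv₀, Real.log_inv]
  · rw [Complex.log_im, Complex.arg_neg_eq_arg_add_pi_of_im_neg hinv_im,
      Complex.arg_inv, if_neg harg]
    simp [Complex.log_im]
    ring


/-- Pointwise limit as `ν → 0`, `ν ≠ 0`: for `z` in the upper half-plane,
`M_ν(z) → (2/π) log(−1/z)` (principal branch). -/
theorem Mfun_tendsto_log (z : ℂ) (hz : 0 < z.im) :
    Filter.Tendsto (fun ν : ℝ => Mfun ν z) (𝓝[≠] (0 : ℝ))
      (𝓝 (((2 / π : ℝ) : ℂ) * Complex.log (-1 / z))) := by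
  set w : ℂ := Complex.log z - Complex.I * π / 2 with hw
  clear_value w
  -- slope limit for exp
  have hde : HasDerivAt (fun ν : ℝ => Complex.exp (ν * w)) w 0 := by
    have h1 : HasDerivAt (fun ν : ℝ => (ν : ℂ) * w) w 0 := by
      simpa using (Complex.ofRealCLM.hasDerivAt (x := (0 : ℝ))).mul_const w
    simpa using h1.cexp
  have hslopeE : Tendsto (fun ν : ℝ => (Complex.exp (ν * w) - 1) / (ν : ℂ)) (𝓝[≠] 0)
      (𝓝 w) := by
    have := hasDerivAt_iff_tendsto_slope.mp hde
    refine this.congr fun ν => ?_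
    simp [slope_def_module, Complex.exp_zero, Complex.real_smul, div_eq_inv_mul]
  -- slope limit for sin
  have hds : HasDerivAt (fun ν : ℝ => Real.sin (π * ν / 2)) (π / 2) 0 := by
    have h1 : HasDerivAt (fun ν : ℝ => π * ν / 2) (π / 2) 0 := by
      simpa using ((hasDerivAt_id (0 : ℝ)).const_mul π).div_const 2
    simpa using h1.sin
  have hslopeS : Tendsto (fun ν : ℝ => Real.sin (π * ν / 2) / ν) (𝓝[≠] 0) (𝓝 (π / 2)) := by
    have := hasDerivAt_iff_tendsto_slope.mp hds
    refine this.congr fun ν => ?_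
    simp [slope_def_field, div_eq_inv_mul, mul_comm]
  have hnu : Tendsto (fun ν : ℝ => ν / Real.sin (π * ν / 2)) (𝓝[≠] 0) (𝓝 (2 / π)) := by
    have h2 : ((π : ℝ) / 2)⁻¹ = 2 / π := by
      rw [inv_div]
    have := hslopeS.inv₀ (by positivity)
    rw [h2] at this
    refine this.congr fun ν => ?_
    rw [inv_div]
  have hcos : Tendsto (fun ν : ℝ => Real.cos (π * ν / 2)) (𝓝[≠] 0) (𝓝 1) := by
    have : Continuous fun ν : ℝ => Real.cos (π * ν / 2) := by continuity
    simpa using (this.tendsto 0).mono_left nhdsWithin_le_nhds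
  have hexp : Tendsto (fun ν : ℝ => Complex.exp (ν * w)) (𝓝[≠] 0) (𝓝 1) := by
    have : Continuous fun ν : ℝ => Complex.exp (ν * w) := by continuity
    simpa using (this.tendsto 0).mono_left nhdsWithin_le_nhds
  have key : Tendsto (fun ν : ℝ => Complex.I * Complex.exp (ν * w)
      + ((Real.cos (π * ν / 2) : ℝ) : ℂ) * ((ν / Real.sin (π * ν / 2) : ℝ) : ℂ)
        * (-((Complex.exp (ν * w) - 1) / (ν : ℂ)))) (𝓝[≠] 0)
      (𝓝 (Complex.I * 1 + (1 : ℂ) * ((2 / π : ℝ) : ℂ) * (-w))) := by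
    refine (hexp.const_mul _).add (Tendsto.mul (Tendsto.mul ?_ ?_) hslopeE.neg)
    · exact (Complex.continuous_ofReal.tendsto _).comp hcos
    · exact (Complex.continuous_ofReal.tendsto _).comp hnu
  have hval : Complex.I * 1 + (1 : ℂ) * ((2 / π : ℝ) : ℂ) * (-w)
      = ((2 / π : ℝ) : ℂ) * Complex.log (-1 / z) := by
    rw [log_neg_one_div hz, hw]
    have hπ : (π : ℂ) ≠ 0 := by exact_mod_cast Real.pi_ne_zero
    push_cast
    field_simp
    ring
  rw [← hval]
  refine key.congr' ?_
  filter_upwards [self_mem_nhdsWithin] with ν hν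
  have hν' : (ν : ℂ) ≠ 0 := by exact_mod_cast hν
  rw [Mfun, zOverIPow, ← hw, Complex.ofReal_div, Complex.ofReal_div]
  generalize Complex.exp ((ν : ℂ) * w) = e
  by_cases hs : Real.sin (π * ν / 2) = 0
  · simp [hs]
  · have hcan : (((ν : ℝ) : ℂ) / ((Real.sin (π * ν / 2) : ℝ) : ℂ)) * ((e - 1) / (ν : ℂ))
        = (e - 1) / ((Real.sin (π * ν / 2) : ℝ) : ℂ) := by
      rw [div_mul_div_comm, mul_comm ((ν : ℝ) : ℂ) (e - 1),
        mul_comm (((Real.sin (π * ν / 2) : ℝ) : ℂ)) ((ν : ℝ) : ℂ)]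
      rw [mul_comm (e - 1) ((ν : ℝ) : ℂ)]
      rw [mul_div_mul_left _ _ hν']
    have hassoc : ((Real.cos (π * ν / 2) : ℝ) : ℂ) * (((ν : ℝ) : ℂ) / ((Real.sin (π * ν / 2) : ℝ) : ℂ)) * -((e - 1) / (ν : ℂ))
        = -(((Real.cos (π * ν / 2) : ℝ) : ℂ) * ((((ν : ℝ) : ℂ) / ((Real.sin (π * ν / 2) : ℝ) : ℂ)) * ((e - 1) / (ν : ℂ)))) := by
      ring
    rw [hassoc, hcan]
    ring
end

section
/- Let μ be a Borel measure on ℝ (not assumed to be supported away from 0), and assume for z in the open upper half-plane that the functions λ ↦ 1/((λ−z)(λ∓i)) and λ ↦ 1/((1+λz)(λ∓i)) are μ-integrable. Define s(z) = ((z−i)/(z+i)) · (∫ dμ(λ)/((λ−z)(λ−i))) / (∫ dμ(λ)/((λ−z)(λ+i))) and t(z) = −((z−i)/(z+i)) · (∫ dμ(λ)/((1+λz)(λ−i))) / (∫ dμ(λ)/((1+λz)(λ+i))). Then t(−1/z) = s(z) for all z in the open upper half-plane (whenever the denominators are nonzero). -/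
open MeasureTheory Complex

/-- Livšic functions of the model pair and of its (negative) inverse:
with `s(z) = ((z−i)/(z+i))·(∫ dμ/((λ−z)(λ−i)))/(∫ dμ/((λ−z)(λ+i)))` and
`t(w) = −((w−i)/(w+i))·(∫ dμ/((1+λw)(λ−i)))/(∫ dμ/((1+λw)(λ+i)))`,
one has `t(−1/z) = s(z)` on the upper half-plane. -/
theorem livsic_inverse_transform (μ : Measure ℝ) (z : ℂ) (hz : 0 < z.im)
    (h1 : Integrable (fun l : ℝ => 1 / (((l : ℂ) - z) * ((l : ℂ) - I))) μ)
    (h2 : Integrable (fun l : ℝ => 1 / (((l : ℂ) - z) * ((l : ℂ) + I))) μ)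
    (h3 : Integrable (fun l : ℝ => 1 / ((1 + (l : ℂ) * (-1 / z)) * ((l : ℂ) - I))) μ)
    (h4 : Integrable (fun l : ℝ => 1 / ((1 + (l : ℂ) * (-1 / z)) * ((l : ℂ) + I))) μ)
    (hd1 : (∫ l : ℝ, 1 / (((l : ℂ) - z) * ((l : ℂ) + I)) ∂μ) ≠ 0)
    (hd2 : (∫ l : ℝ, 1 / ((1 + (l : ℂ) * (-1 / z)) * ((l : ℂ) + I)) ∂μ) ≠ 0) :
    -(((-1 / z) - I) / ((-1 / z) + I)) *
        ((∫ l : ℝ, 1 / ((1 + (l : ℂ) * (-1 / z)) * ((l : ℂ) - I)) ∂μ) /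
          (∫ l : ℝ, 1 / ((1 + (l : ℂ) * (-1 / z)) * ((l : ℂ) + I)) ∂μ)) =
      ((z - I) / (z + I)) *
        ((∫ l : ℝ, 1 / (((l : ℂ) - z) * ((l : ℂ) - I)) ∂μ) /
          (∫ l : ℝ, 1 / (((l : ℂ) - z) * ((l : ℂ) + I)) ∂μ)) := by
  have hz0 : z ≠ 0 := by
    intro h; rw [h] at hz; simp at hz
  -- pointwise identity: `1/((1+λ(−1/z))(λ+c)) = (−z)·1/((λ−z)(λ+c))`
  have key : ∀ l : ℝ, ∀ c : ℂ,
      1 / ((1 + (l : ℂ) * (-1 / z)) * ((l : ℂ) + c)) =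
        (-z) * (1 / (((l : ℂ) - z) * ((l : ℂ) + c))) := by
    intro l c
    have hlz : ((l : ℂ) - z) ≠ 0 := by
      intro h
      have := congrArg Complex.im h
      simp at this
      linarith
    have hfac : (1 + (l : ℂ) * (-1 / z)) = -((l : ℂ) - z) / z := by
      field_simp; ring
    rw [hfac]
    rcases eq_or_ne ((l : ℂ) + c) 0 with hc | hc
    · simp [hc]
    · field_simp
  have e3 : (∫ l : ℝ, 1 / ((1 + (l : ℂ) * (-1 / z)) * ((l : ℂ) - I)) ∂μ)
      = (-z) * ∫ l : ℝ, 1 / (((l : ℂ) - z) * ((l : ℂ) - I)) ∂μ := by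
    rw [← integral_const_mul]
    congr 1; ext l
    simpa [sub_eq_add_neg] using key l (-I)
  have e4 : (∫ l : ℝ, 1 / ((1 + (l : ℂ) * (-1 / z)) * ((l : ℂ) + I)) ∂μ)
      = (-z) * ∫ l : ℝ, 1 / (((l : ℂ) - z) * ((l : ℂ) + I)) ∂μ := by
    rw [← integral_const_mul]
    congr 1; ext l
    exact key l I
  have hpref : -(((-1 / z) - I) / ((-1 / z) + I)) = (z - I) / (z + I) := by
    have hzi : z + I ≠ 0 := by
      intro h
      have := congrArg Complex.im h
      simp at this
      linarith
    have hzi' : (-1 / z) + I ≠ 0 := by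
      intro h
      have hzmi : z = -I := by
        field_simp at h
        linear_combination (-I) * h + z * Complex.I_sq
      rw [hzmi] at hz
      norm_num at hz
    have hzi'' : (-1 + z * I) ≠ 0 := by
      intro h
      apply hzi'
      field_simp
      linear_combination h
    rw [← neg_div, div_eq_div_iff hzi' hzi]
    field_simp
    linear_combination (2*z) * Complex.I_sq
  rw [e3, e4, hpref, mul_div_mul_left _ _ (neg_ne_zero.mpr hz0)]
end
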